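/- For two finite signed measures μ, ν supported in B(0,R), the non-local vector fields satisfy the stability estimate ‖V[μ] − V[ν]‖_{L^∞(B(0,R))} ≤ (L_φ + φ_R)·ρ(μ,ν), where φ_R = |φ(0)| + 2L_φR and ρ is the Bounded Lipschitz distance. -/

import Mathlib

open MeasureTheory
open scoped NNReal

/-- Integral of a vector-valued function against a finite signed measure. -/
noncomputable def sInt {d : ℕ} (μ : SignedMeasure (EuclideanSpace ℝ (Fin d)))
    (f : EuclideanSpace ℝ (Fin d) → EuclideanSpace ℝ (Fin d)) :
    EuclideanSpace ℝ (Fin d) :=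
  (∫ y, f y ∂μ.toJordanDecomposition.posPart) -
    (∫ y, f y ∂μ.toJordanDecomposition.negPart)

/-- Integral of a scalar function against a finite signed measure. -/
noncomputable def sIntR {d : ℕ} (μ : SignedMeasure (EuclideanSpace ℝ (Fin d)))
    (f : EuclideanSpace ℝ (Fin d) → ℝ) : ℝ :=
  (∫ y, f y ∂μ.toJordanDecomposition.posPart) -
    (∫ y, f y ∂μ.toJordanDecomposition.negPart)

/-- The non-local vector field `V[μ](x) = ∫ φ(x - y) dμ(y)`. -/
noncomputable def Vfield {d : ℕ} (φ : EuclideanSpace ℝ (Fin d) → EuclideanSpace ℝ (Fin d))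
    (μ : SignedMeasure (EuclideanSpace ℝ (Fin d))) (x : EuclideanSpace ℝ (Fin d)) :
    EuclideanSpace ℝ (Fin d) :=
  sInt μ (fun y => φ (x - y))

/-- Bounded Lipschitz (flat) distance between signed measures, by duality. -/
noncomputable def BLdist {d : ℕ} (μ ν : SignedMeasure (EuclideanSpace ℝ (Fin d))) : ℝ :=
  sSup {r | ∃ f : EuclideanSpace ℝ (Fin d) → ℝ, LipschitzWith 1 f ∧
    HasCompactSupport f ∧ (∀ x, |f x| ≤ 1) ∧ r = sIntR μ f - sIntR ν f}

/-!
Write `v = V[μ](x) - V[ν](x)` and `e = v / ‖v‖`, so that `‖v‖ = ∫ ⟪e, φ (x - y)⟫ d(μ - ν)(y)`.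
The integrand is `L_φ`-Lipschitz and bounded by `φ_R` on `B(0, R)`, which carries both measures.
Clamping it between `±M`, for a cutoff `M` of slope `φ_R` equal to `φ_R` on the ball and vanishing
outside `B(0, R + 1)`, changes nothing on the ball and yields a compactly supported
`(L_φ + φ_R)`-Lipschitz function bounded by `φ_R`; divided by `L_φ + φ_R` it competes in the
supremum defining `ρ`.
-/

open Metric Set
open scoped InnerProductSpace

theorem LipschitzWith.const_mul {X : Type*} [PseudoEMetricSpace X] {f : X → ℝ} {K : ℝ≥0}
    (hf : LipschitzWith K f) (c : ℝ≥0) : LipschitzWith (c * K) fun x => c * f x := by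
  simpa [Function.comp_def] using (lipschitzWith_smul (c : ℝ)).comp hf

theorem LipschitzWith.const_inner_of_norm_le_one {X E : Type*} [PseudoEMetricSpace X]
    [NormedAddCommGroup E] [InnerProductSpace ℝ E] {f : X → E} {K : ℝ≥0}
    (hf : LipschitzWith K f) {e : E} (he : ‖e‖ ≤ 1) : LipschitzWith K fun x => ⟪e, f x⟫_ℝ := by
  have h := (innerSL ℝ e).lipschitz.comp hf
  rw [← one_mul K]
  refine h.weaken (mul_le_mul_left ?_ K)
  rw [← NNReal.coe_le_coe, coe_nnnorm, innerSL_apply_norm]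
  exact he

theorem LipschitzWith.norm_le_norm_zero_add {E F : Type*} [SeminormedAddCommGroup E]
    [SeminormedAddCommGroup F] {f : E → F} {K : ℝ≥0} (hf : LipschitzWith K f) (x : E) :
    ‖f x‖ ≤ ‖f 0‖ + K * ‖x‖ := by
  have h := hf.dist_le_mul x 0
  rw [dist_eq_norm, dist_zero_right] at h
  linarith [norm_le_insert' (f x) (f 0)]

theorem LipschitzWith.abs_inner_apply_sub_le {E : Type*} [NormedAddCommGroup E]
    [InnerProductSpace ℝ E] {φ : E → E} {K : ℝ≥0} (hφ : LipschitzWith K φ) {e : E} (he : ‖e‖ ≤ 1)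
    {R : ℝ} {x y : E} (hx : ‖x‖ ≤ R) (hy : ‖y‖ ≤ R) :
    |⟪e, φ (x - y)⟫_ℝ| ≤ ‖φ 0‖ + 2 * K * R :=
  calc |⟪e, φ (x - y)⟫_ℝ| ≤ ‖e‖ * ‖φ (x - y)‖ := abs_real_inner_le_norm _ _
    _ ≤ ‖φ (x - y)‖ := mul_le_of_le_one_left (norm_nonneg _) he
    _ ≤ ‖φ 0‖ + K * ‖x - y‖ := hφ.norm_le_norm_zero_add _
    _ ≤ ‖φ 0‖ + K * (R + R) := by gcongr; exact (_root_.norm_sub_le _ _).trans (add_le_add hx hy)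
    _ = ‖φ 0‖ + 2 * K * R := by ring

theorem exists_norm_le_one_inner_eq_norm {E : Type*} [NormedAddCommGroup E]
    [InnerProductSpace ℝ E] (v : E) : ∃ e : E, ‖e‖ ≤ 1 ∧ ⟪e, v⟫_ℝ = ‖v‖ := by
  refine ⟨‖v‖⁻¹ • v, ?_, ?_⟩
  · rw [norm_smul, norm_inv, norm_norm]
    exact inv_mul_le_one_of_le₀ le_rfl (norm_nonneg _)
  · rw [real_inner_smul_left, real_inner_self_eq_norm_mul_norm, ← mul_assoc, inv_mul_mul_self]

theorem exists_lipschitzWith_hasCompactSupport_eqOn_closedBall {X : Type*} [PseudoMetricSpace X]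
    [ProperSpace X] {g : X → ℝ} {L B : ℝ≥0} (hg : LipschitzWith L g) (a : X) (R : ℝ)
    (hgB : ∀ y ∈ closedBall a R, |g y| ≤ B) :
    ∃ f : X → ℝ, LipschitzWith (max L B) f ∧ HasCompactSupport f ∧ (∀ y, |f y| ≤ B) ∧
      EqOn f g (closedBall a R) := by
  set M : X → ℝ := fun y => min B (max 0 (B * (R + 1 - dist y a)))
  have hM : LipschitzWith B M := by
    have h := ((LipschitzWith.const (R + 1)).sub (LipschitzWith.dist_left a)).const_mul B
    simpa only [zero_add, mul_one] using (h.const_max 0).const_min B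
  have hM_nonneg (y : X) : 0 ≤ M y := le_min B.2 (le_max_left _ _)
  have hM_ball : ∀ y ∈ closedBall a R, M y = B := fun y hy => by
    refine min_eq_left (le_max_of_le_right ?_)
    nlinarith [mem_closedBall.mp hy, B.2]
  have hM_far : ∀ y ∉ closedBall a (R + 1), M y = 0 := fun y hy => by
    have h : B * (R + 1 - dist y a) ≤ 0 :=
      mul_nonpos_of_nonneg_of_nonpos B.2 (by linarith [not_le.mp (mt mem_closedBall.mpr hy)])
    simp only [M, max_eq_left h]
    exact min_eq_right B.coe_nonneg
  refine ⟨fun y => max (-M y) (min (g y) (M y)), ?_, ?_, fun y => ?_, fun y hy => ?_⟩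
  · exact (hM.neg.max (hg.min hM)).weaken (max_le (le_max_right _ _) le_rfl)
  · refine HasCompactSupport.intro (isCompact_closedBall a (R + 1)) fun y hy => ?_
    simp [hM_far y hy]
  · refine (abs_le.mpr ⟨le_max_left _ _, max_le ?_ (min_le_right _ _)⟩).trans (min_le_left _ _)
    linarith [hM_nonneg y]
  · obtain ⟨hg_lower, hg_upper⟩ := abs_le.mp (hgB y hy)
    simp only [hM_ball y hy, min_eq_left hg_upper, max_eq_right hg_lower]

theorem integral_eq_inner_integral_of_eqOn {X E : Type*} [MeasurableSpace X] [TopologicalSpace X]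
    [OpensMeasurableSpace X] [T2Space X] [NormedAddCommGroup E] [InnerProductSpace ℝ E]
    [CompleteSpace E] {m : Measure X} [IsFiniteMeasureOnCompacts m] {s : Set X} (hs : IsCompact s)
    (hm : m sᶜ = 0) {h : X → E} (hh : ContinuousOn h s) (e : E) {f : X → ℝ}
    (hf : EqOn f (fun y => ⟪e, h y⟫_ℝ) s) :
    ∫ y, f y ∂m = ⟪e, ∫ y, h y ∂m⟫_ℝ := by
  rw [← Measure.restrict_eq_self_of_ae_mem (ae_iff.mpr hm),
    setIntegral_congr_fun hs.measurableSet hf]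
  exact integral_inner (hh.integrableOn_compact hs) e

section SignedMeasure

variable {d : ℕ}

theorem sIntR_eq_inner_sInt {μ : SignedMeasure (EuclideanSpace ℝ (Fin d))}
    {s : Set (EuclideanSpace ℝ (Fin d))} (hs : IsCompact s) (hμ : μ.totalVariation sᶜ = 0)
    {h : EuclideanSpace ℝ (Fin d) → EuclideanSpace ℝ (Fin d)} (hh : ContinuousOn h s)
    (e : EuclideanSpace ℝ (Fin d)) {f : EuclideanSpace ℝ (Fin d) → ℝ}
    (hf : EqOn f (fun y => ⟪e, h y⟫_ℝ) s) :
    sIntR μ f = ⟪e, sInt μ h⟫_ℝ := by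
  have hpos : μ.toJordanDecomposition.posPart ≪ μ.totalVariation := .add_right .rfl _
  have hneg : μ.toJordanDecomposition.negPart ≪ μ.totalVariation := .add_right' .rfl _
  rw [sIntR, sInt, inner_sub_right,
    integral_eq_inner_integral_of_eqOn hs (hpos hμ) hh e hf,
    integral_eq_inner_integral_of_eqOn hs (hneg hμ) hh e hf]

theorem sIntR_const_mul (μ : SignedMeasure (EuclideanSpace ℝ (Fin d))) (c : ℝ)
    (f : EuclideanSpace ℝ (Fin d) → ℝ) : sIntR μ (fun x => c * f x) = c * sIntR μ f := by
  simp only [sIntR, integral_const_mul, mul_sub]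

theorem abs_sIntR_le (μ : SignedMeasure (EuclideanSpace ℝ (Fin d)))
    {f : EuclideanSpace ℝ (Fin d) → ℝ} (hf : ∀ x, |f x| ≤ 1) :
    |sIntR μ f| ≤ μ.totalVariation.real univ := by
  have h (m : Measure (EuclideanSpace ℝ (Fin d))) [IsFiniteMeasure m] :
      |∫ y, f y ∂m| ≤ m.real univ := by
    simpa using norm_integral_le_of_norm_le_const (μ := m) (C := 1)
      (ae_of_all _ fun x => (Real.norm_eq_abs _).trans_le (hf x))
  rw [SignedMeasure.totalVariation, measureReal_add_apply]
  exact (abs_sub _ _).trans (add_le_add (h _) (h _))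

theorem bddAbove_BLdist_set (μ ν : SignedMeasure (EuclideanSpace ℝ (Fin d))) :
    BddAbove {r | ∃ f : EuclideanSpace ℝ (Fin d) → ℝ, LipschitzWith 1 f ∧
      HasCompactSupport f ∧ (∀ x, |f x| ≤ 1) ∧ r = sIntR μ f - sIntR ν f} := by
  refine ⟨μ.totalVariation.real univ + ν.totalVariation.real univ, ?_⟩
  rintro r ⟨f, -, -, hf, rfl⟩
  exact (abs_sub _ _ |>.trans' (le_abs_self _)).trans
    (add_le_add (abs_sIntR_le μ hf) (abs_sIntR_le ν hf))

theorem sIntR_sub_sIntR_le_mul_BLdist (μ ν : SignedMeasure (EuclideanSpace ℝ (Fin d)))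
    {f : EuclideanSpace ℝ (Fin d) → ℝ} {K : ℝ≥0} (hf : LipschitzWith K f)
    (hfs : HasCompactSupport f) (hfK : ∀ x, |f x| ≤ K) :
    sIntR μ f - sIntR ν f ≤ K * BLdist μ ν := by
  rcases eq_or_ne K 0 with rfl | hK
  · have hf0 : f = 0 := funext fun x => abs_nonpos_iff.mp (by simpa using hfK x)
    simp [hf0, sIntR]
  have hK' : (0 : ℝ) < K := by positivity
  have hmem := le_csSup (bddAbove_BLdist_set μ ν)
    ⟨fun x => (K⁻¹ : ℝ≥0) * f x, by simpa [hK] using hf.const_mul K⁻¹,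
      hfs.mul_left, fun x => ?_, rfl⟩
  · rw [sIntR_const_mul, sIntR_const_mul, ← mul_sub] at hmem
    calc sIntR μ f - sIntR ν f = K * ((K⁻¹ : ℝ≥0) * (sIntR μ f - sIntR ν f)) := by
          push_cast; field_simp
      _ ≤ K * BLdist μ ν := mul_le_mul_of_nonneg_left hmem hK'.le
  · rw [abs_mul, NNReal.abs_eq, NNReal.coe_inv]
    exact inv_mul_le_one_of_le₀ (hfK x) hK'.le

end SignedMeasure

theorem Vfield_stability_general {d : ℕ} (R : ℝ)
    (φ : EuclideanSpace ℝ (Fin d) → EuclideanSpace ℝ (Fin d)) (Lφ : ℝ≥0)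
    (hφ : LipschitzWith Lφ φ)
    (μ ν : SignedMeasure (EuclideanSpace ℝ (Fin d)))
    (hμ : μ.totalVariation (Metric.closedBall 0 R)ᶜ = 0)
    (hν : ν.totalVariation (Metric.closedBall 0 R)ᶜ = 0) :
    ∀ x ∈ Metric.closedBall (0 : EuclideanSpace ℝ (Fin d)) R,
      ‖Vfield φ μ x - Vfield φ ν x‖ ≤
        ((Lφ : ℝ) + (‖φ 0‖ + 2 * (Lφ : ℝ) * R)) * BLdist μ ν := by
  intro x hx
  have hx' : ‖x‖ ≤ R := mem_closedBall_zero_iff.mp hx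
  have hR : 0 ≤ R := (norm_nonneg x).trans hx'
  obtain ⟨e, he, hev⟩ := exists_norm_le_one_inner_eq_norm (Vfield φ μ x - Vfield φ ν x)
  have hφx : LipschitzWith Lφ fun y => φ (x - y) := by
    simpa [Function.comp_def] using hφ.comp (IsometryEquiv.subLeft x).isometry.lipschitz
  let B : ℝ≥0 := ⟨‖φ 0‖ + 2 * Lφ * R, add_nonneg (norm_nonneg _) (by positivity)⟩
  obtain ⟨f, hfL, hfs, hfB, hfg⟩ := exists_lipschitzWith_hasCompactSupport_eqOn_closedBall
    (B := B) (hφx.const_inner_of_norm_le_one he) 0 R fun y hy =>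
      hφ.abs_inner_apply_sub_le he hx' (mem_closedBall_zero_iff.mp hy)
  have hK : max Lφ B ≤ Lφ + B := max_le le_self_add le_add_self
  calc ‖Vfield φ μ x - Vfield φ ν x‖ = sIntR μ f - sIntR ν f := by
        rw [sIntR_eq_inner_sInt (isCompact_closedBall 0 R) hμ hφx.continuous.continuousOn e hfg,
          sIntR_eq_inner_sInt (isCompact_closedBall 0 R) hν hφx.continuous.continuousOn e hfg,
          ← inner_sub_right, ← hev]
        rfl
    _ ≤ (Lφ + B : ℝ≥0) * BLdist μ ν := sIntR_sub_sIntR_le_mul_BLdist μ ν (hfL.weaken hK) hfs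
      fun y => (hfB y).trans (NNReal.coe_le_coe.mpr le_add_self)
    _ = ((Lφ : ℝ) + (‖φ 0‖ + 2 * (Lφ : ℝ) * R)) * BLdist μ ν := by push_cast; rfl

/-- stability of the non-local vector field in the BL distance:
`‖V[μ] - V[ν]‖_{L^∞(B(0,R))} ≤ (L_φ + φ_R) ρ(μ,ν)` with `φ_R = |φ(0)| + 2L_φ R`. -/
theorem Vfield_stability {d : ℕ} (R : ℝ) (hR : 0 < R)
    (φ : EuclideanSpace ℝ (Fin d) → EuclideanSpace ℝ (Fin d)) (Lφ : ℝ≥0)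
    (hφ : LipschitzWith Lφ φ)
    (μ ν : SignedMeasure (EuclideanSpace ℝ (Fin d)))
    (hμ : μ.totalVariation (Metric.closedBall 0 R)ᶜ = 0)
    (hν : ν.totalVariation (Metric.closedBall 0 R)ᶜ = 0) :
    ∀ x ∈ Metric.closedBall (0 : EuclideanSpace ℝ (Fin d)) R,
      ‖Vfield φ μ x - Vfield φ ν x‖ ≤
        ((Lφ : ℝ) + (‖φ 0‖ + 2 * (Lφ : ℝ) * R)) * BLdist μ ν :=
  Vfield_stability_general R φ Lφ hφ μ ν hμ hν
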